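/- arXiv:1511.00824 — 8 statements merged into one kernel-verified Lean document; each statement's English description precedes it below -/
import Mathlib

section
/- For groups X and Z and a surjective group homomorphism f : X → Y, the commutative square with top map θ_{X,Z} : X ∗ Z → X × Z (induced by the inclusions into the product), bottom map θ_{Y,Z} : Y ∗ Z → Y × Z, left map f ∗ Z : X ∗ Z → Y ∗ Z and right map f × Z : X × Z → Y × Z is a pushout square in the category of groups, and moreover the comparison map X ∗ Z → (Y ∗ Z) ×_{Y × Z} (X × Z) to the pullback is surjective. -/
/-!
Since `f × Z ∘ θ_{X,Z} = θ_{Y,Z} ∘ (f ∗ Z)` and `θ_{X,Z}` is surjective, a cocone `(u, v)` on the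
span forces `u (inl (f x))` and `u (inr z)` to commute, being images under `v` of the commuting
elements `(x, 1)` and `(1, z)`. As `f` is onto, `u` then factors (uniquely, `θ_{Y,Z}` being onto)
through `Y × Z` as `(y, z) ↦ u (inl y) * u (inr z)`. For the pullback, lift `a` to some `w₀` along
the surjection `f ∗ Z`; then `θ_{X,Z} w₀` and `b` differ by an element `k` of `ker (f × Z)`, and
`w₀ * inl k.1 * inr k.2` is the required preimage.
-/

open Function

namespace Monoid.Coprod

theorem map_surjective {M N M' N' : Type*} [MulOneClass M] [MulOneClass N] [MulOneClass M']
    [MulOneClass N'] {f : M →* M'} {g : N →* N'} (hf : Surjective f) (hg : Surjective g) :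
    Surjective (map f g) := by
  intro c
  induction c using induction_on with
  | inl m' =>
    obtain ⟨m, rfl⟩ := hf m'
    exact ⟨inl m, rfl⟩
  | inr n' =>
    obtain ⟨n, rfl⟩ := hg n'
    exact ⟨inr n, rfl⟩
  | mul _ _ hc hd =>
    obtain ⟨c, rfl⟩ := hc
    obtain ⟨d, rfl⟩ := hd
    exact ⟨c * d, map_mul _ _ _⟩

section Monoid

variable {M N M' N' W : Type*} [Monoid M] [Monoid N] [Monoid M'] [Monoid N'] [Monoid W]

theorem toProd_comp_map (f : M →* M') (g : N →* N') :
    toProd.comp (map f g) = (f.prodMap g).comp toProd := by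
  ext <;> simp

theorem toProd_map (f : M →* M') (g : N →* N') (x : M ∗ N) :
    toProd (map f g x) = f.prodMap g (toProd x) :=
  DFunLike.congr_fun (toProd_comp_map f g) x

theorem noncommCoprod_comp_toProd (u : M ∗ N →* W)
    (comm : ∀ m n, Commute (u.comp inl m) (u.comp inr n)) :
    ((u.comp inl).noncommCoprod (u.comp inr) comm).comp toProd = u := by
  ext <;> simp

theorem commute_inl_inr_of_comp_map_eq {f : M →* M'} {g : N →* N'} (hf : Surjective f)
    (hg : Surjective g) {u : M' ∗ N' →* W} {v : M × N →* W}
    (huv : u.comp (map f g) = v.comp toProd) (m' : M') (n' : N') :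
    Commute (u (inl m')) (u (inr n')) := by
  obtain ⟨m, rfl⟩ := hf m'
  obtain ⟨n, rfl⟩ := hg n'
  have hinl : u (inl (f m)) = v (m, 1) := DFunLike.congr_fun huv (inl m)
  have hinr : u (inr (g n)) = v (1, n) := DFunLike.congr_fun huv (inr n)
  rw [hinl, hinr]
  exact (MonoidHom.commute_inl_inr m n).map v

theorem existsUnique_comp_toProd_eq_and_comp_prodMap_eq {f : M →* M'} {g : N →* N'}
    (hf : Surjective f) (hg : Surjective g) {u : M' ∗ N' →* W} {v : M × N →* W}
    (huv : u.comp (map f g) = v.comp toProd) :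
    ∃! w : M' × N' →* W, w.comp toProd = u ∧ w.comp (f.prodMap g) = v := by
  have hw := noncommCoprod_comp_toProd u (commute_inl_inr_of_comp_map_eq hf hg huv)
  refine ⟨_, ⟨hw, ?_⟩, fun w' ⟨hw', _⟩ => ?_⟩
  · rw [← MonoidHom.cancel_right toProd_surjective, MonoidHom.comp_assoc, ← toProd_comp_map,
      ← MonoidHom.comp_assoc, hw, huv]
  · rwa [← MonoidHom.cancel_right toProd_surjective, hw]

end Monoid

theorem exists_map_eq_and_toProd_eq {G H G' H' : Type*} [Group G] [Group H] [Group G']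
    [Group H'] {f : G →* G'} {g : H →* H'} (hf : Surjective f) (hg : Surjective g)
    {a : G' ∗ H'} {b : G × H} (hab : toProd a = f.prodMap g b) :
    ∃ w : G ∗ H, map f g w = a ∧ toProd w = b := by
  obtain ⟨w₀, rfl⟩ := map_surjective hf hg a
  set k := (toProd w₀)⁻¹ * b
  have hk : f.prodMap g k = 1 := by
    rw [map_mul, map_inv, ← hab, toProd_map, inv_mul_cancel]
  have hk₁ : f k.1 = 1 := congrArg Prod.fst hk
  have hk₂ : g k.2 = 1 := congrArg Prod.snd hk
  refine ⟨w₀ * (inl k.1 * inr k.2), ?_, ?_⟩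
  · rw [map_mul, map_mul, map_apply_inl, map_apply_inr, hk₁, hk₂, map_one, map_one, mul_one, mul_one]
  · rw [map_mul, map_mul, toProd_apply_inl, toProd_apply_inr, Prod.fst_mul_snd,
      mul_inv_cancel_left]

end Monoid.Coprod

open Monoid

/-- For groups `X, Z` and a surjective homomorphism `f : X → Y`, the commutative square with
top map `θ_{X,Z} : X ∗ Z → X × Z`, bottom map `θ_{Y,Z} : Y ∗ Z → Y × Z`, left map
`f ∗ Z` and right map `f × Z` is a pushout square in the category of groups, and the
comparison map `X ∗ Z → (Y ∗ Z) ×_{Y × Z} (X × Z)` to the pullback is surjective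
(the square is a regular pushout). -/
theorem theta_square_is_regular_pushout
    {X : Type u} {Y : Type u} {Z : Type u} [Group X] [Group Y] [Group Z]
    (f : X →* Y) (hf : Function.Surjective f) :
    -- the square commutes
    ((Coprod.lift (MonoidHom.inl Y Z) (MonoidHom.inr Y Z)).comp
        (Coprod.map f (MonoidHom.id Z)) =
      (f.prodMap (MonoidHom.id Z)).comp
        (Coprod.lift (MonoidHom.inl X Z) (MonoidHom.inr X Z))) ∧
    -- it is a pushout: universal property
    (∀ (W : Type u) (_ : Group W) (u : Monoid.Coprod Y Z →* W) (v : X × Z →* W),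
        u.comp (Coprod.map f (MonoidHom.id Z)) =
          v.comp (Coprod.lift (MonoidHom.inl X Z) (MonoidHom.inr X Z)) →
        ∃! w : Y × Z →* W,
          w.comp (Coprod.lift (MonoidHom.inl Y Z) (MonoidHom.inr Y Z)) = u ∧
            w.comp (f.prodMap (MonoidHom.id Z)) = v) ∧
    -- the comparison map to the pullback is surjective
    (∀ (a : Monoid.Coprod Y Z) (b : X × Z),
        Coprod.lift (MonoidHom.inl Y Z) (MonoidHom.inr Y Z) a =
          f.prodMap (MonoidHom.id Z) b →
        ∃ w : Monoid.Coprod X Z,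
          Coprod.map f (MonoidHom.id Z) w = a ∧
            Coprod.lift (MonoidHom.inl X Z) (MonoidHom.inr X Z) w = b) :=
  have hid : Function.Surjective (MonoidHom.id Z) := surjective_id
  ⟨Coprod.toProd_comp_map f (.id Z),
    fun _ _ _ _ huv => Coprod.existsUnique_comp_toProd_eq_and_comp_prodMap_eq hf hid huv,
    fun _ _ hab => Coprod.exists_map_eq_and_toProd_eq hf hid hab⟩
end

section
/- For any group X, the abelianization of X is the pushout (in the category of groups) of the canonical map θ_{X,X} : X ∗ X → X × X along the folding map ∇ : X ∗ X → X induced by the identity on each free factor. Concretely, X/[X,X] together with the quotient map X → X/[X,X] and the map X × X → X/[X,X], (a,b) ↦ ab[X,X], is the pushout of θ_{X,X} and ∇. -/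
/-!
A cocone `(u, v)` over `X ←∇− X ∗ X −θ→ X × X` forces `v (a, b) = u a * u b`; writing `(a, b)`
once as `(a, 1)(1, b)` and once as `(1, b)(a, 1)` shows that the image of `u` is commutative.
So `u` kills `[X, X]` and factors uniquely through `X/[X, X]`, and this factorization also
recovers `v`.
-/

open Monoid

section Cocone

variable {X W : Type*} [Monoid X] [Monoid W] {u : X →* W} {v : X × X →* W}

theorem apply_mk_one_of_comp_coprodLift_eq
    (h : v.comp (Coprod.lift (MonoidHom.inl X X) (MonoidHom.inr X X)) =
      u.comp (Coprod.lift (MonoidHom.id X) (MonoidHom.id X))) (a : X) :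
    v (a, 1) = u a :=
  congrArg (· (Coprod.inl a)) h

theorem apply_one_mk_of_comp_coprodLift_eq
    (h : v.comp (Coprod.lift (MonoidHom.inl X X) (MonoidHom.inr X X)) =
      u.comp (Coprod.lift (MonoidHom.id X) (MonoidHom.id X))) (b : X) :
    v (1, b) = u b :=
  congrArg (· (Coprod.inr b)) h

theorem apply_eq_mul_of_comp_coprodLift_eq
    (h : v.comp (Coprod.lift (MonoidHom.inl X X) (MonoidHom.inr X X)) =
      u.comp (Coprod.lift (MonoidHom.id X) (MonoidHom.id X))) (a b : X) :
    v (a, b) = u a * u b := by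
  rw [← apply_mk_one_of_comp_coprodLift_eq h a, ← apply_one_mk_of_comp_coprodLift_eq h b,
    ← map_mul, Prod.mk_mul_mk, mul_one, one_mul]

theorem commute_of_comp_coprodLift_eq
    (h : v.comp (Coprod.lift (MonoidHom.inl X X) (MonoidHom.inr X X)) =
      u.comp (Coprod.lift (MonoidHom.id X) (MonoidHom.id X))) (a b : X) :
    Commute (u a) (u b) :=
  calc u a * u b = v ((1, b) * (a, 1)) := by
        rw [apply_eq_mul_of_comp_coprodLift_eq h, Prod.mk_mul_mk, mul_one, one_mul]
    _ = u b * u a := by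
        rw [map_mul, apply_mk_one_of_comp_coprodLift_eq h, apply_one_mk_of_comp_coprodLift_eq h]

end Cocone

theorem fst_mul_snd_comp_coprodLift {X A : Type*} [Monoid X] [CommMonoid A] (f : X →* A) :
    (f.comp (MonoidHom.fst X X) * f.comp (MonoidHom.snd X X)).comp
        (Coprod.lift (MonoidHom.inl X X) (MonoidHom.inr X X)) =
      f.comp (Coprod.lift (MonoidHom.id X) (MonoidHom.id X)) := by
  ext x <;> simp

theorem commutator_le_ker_of_commute {G H : Type*} [Group G] [Group H] (f : G →* H)
    (hf : ∀ a b, Commute (f a) (f b)) : commutator G ≤ f.ker := by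
  rw [commutator, Subgroup.commutator_le]
  intro a _ b _
  rw [MonoidHom.mem_ker, map_commutatorElement, commutatorElement_eq_one_iff_commute]
  exact hf a b

namespace Abelianization

variable {G H : Type*} [Group G] [Group H]

def liftOfCommute (f : G →* H) (hf : ∀ a b, Commute (f a) (f b)) : Abelianization G →* H :=
  QuotientGroup.lift (commutator G) f (commutator_le_ker_of_commute f hf)

@[simp]
theorem liftOfCommute_of (f : G →* H) (hf : ∀ a b, Commute (f a) (f b)) (a : G) :
    liftOfCommute f hf (of a) = f a :=
  rfl

theorem liftOfCommute_comp_of (f : G →* H) (hf : ∀ a b, Commute (f a) (f b)) :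
    (liftOfCommute f hf).comp of = f :=
  MonoidHom.ext (liftOfCommute_of f hf)

end Abelianization

/-- The abelianization of a group `X` is the pushout of `θ_{X,X} : X ∗ X → X × X` along the
folding map `∇ : X ∗ X → X`: the square with the quotient map `X → X/[X,X]` and the map
`X × X → X/[X,X], (a,b) ↦ ab[X,X]` commutes and satisfies the universal property of the
pushout in the category of groups. -/
theorem abelianization_is_pushout_of_theta_along_fold
    {X : Type u} [Group X] :
    ((Abelianization.of.comp (MonoidHom.fst X X) *
          Abelianization.of.comp (MonoidHom.snd X X)).comp
        (Coprod.lift (MonoidHom.inl X X) (MonoidHom.inr X X)) =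
      Abelianization.of.comp (Coprod.lift (MonoidHom.id X) (MonoidHom.id X))) ∧
    ∀ (W : Type u) (_ : Group W) (u : X →* W) (v : X × X →* W),
      v.comp (Coprod.lift (MonoidHom.inl X X) (MonoidHom.inr X X)) =
        u.comp (Coprod.lift (MonoidHom.id X) (MonoidHom.id X)) →
      ∃! w : Abelianization X →* W,
        w.comp Abelianization.of = u ∧
          w.comp (Abelianization.of.comp (MonoidHom.fst X X) *
            Abelianization.of.comp (MonoidHom.snd X X)) = v := by
  refine ⟨fst_mul_snd_comp_coprodLift Abelianization.of, fun W _ u v h => ?_⟩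
  set w := Abelianization.liftOfCommute u (commute_of_comp_coprodLift_eq h)
  refine ⟨w, ⟨Abelianization.liftOfCommute_comp_of _ _, ?_⟩, ?_⟩
  · ext ⟨a, b⟩
    simp [w, apply_eq_mul_of_comp_coprodLift_eq h a b]
  · rintro w' ⟨hw', -⟩
    exact Abelianization.hom_ext _ _ (hw'.trans (Abelianization.liftOfCommute_comp_of _ _).symm)
end

section
/- For any group X, the iterated commutator [X,[X,X]] is contained in the image of ker π₁ ∩ ker π₂ ∩ ker π₃ under the ternary folding map δ₃ : X ∗ X ∗ X → X (the homomorphism restricting to the identity on each free factor), where π_i : X ∗ X ∗ X → X ∗ X are the three contractions killing the i-th factor. -/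
open Monoid
open scoped commutatorElement

variable {X : Type u} [Group X]

/-- The ternary free product `X ∗ X ∗ X`. -/
abbrev TripleCoprod (X : Type u) [Group X] :=
  Monoid.Coprod (Monoid.Coprod X X) X

/-- The contraction killing the first factor. -/
noncomputable def contr₁ : TripleCoprod X →* Monoid.Coprod X X :=
  Coprod.lift (Coprod.lift 1 Coprod.inl) Coprod.inr

/-- The contraction killing the second factor. -/
noncomputable def contr₂ : TripleCoprod X →* Monoid.Coprod X X :=
  Coprod.lift (Coprod.lift Coprod.inl 1) Coprod.inr

/-- The contraction killing the third factor. -/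
noncomputable def contr₃ : TripleCoprod X →* Monoid.Coprod X X :=
  Coprod.lift (MonoidHom.id _) 1

/-- The ternary folding map `δ₃ : X ∗ X ∗ X → X`, the identity on each free factor. -/
noncomputable def fold₃ : TripleCoprod X →* X :=
  Coprod.lift (Coprod.lift (MonoidHom.id X) (MonoidHom.id X)) (MonoidHom.id X)

/-!
The Higgins commutator is the image of a normal subgroup under the surjection `δ₃`, hence normal.
It contains every `⁅x, ⁅y, z⁆⁆`: lift to `⁅ι₁ x, ⁅ι₂ y, ι₃ z⁆⁆`, which each contraction kills
because it kills one of the three letters. For a normal subgroup `N`, the elements `c` with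
`⁅x, c⁆ ∈ N` for all `x` form a subgroup (the preimage of the centre of `X ⧸ N`), so this
condition on the generators `⁅y, z⁆` of `⁅X, X⁆` passes to all of `⁅X, X⁆`.
-/

namespace Subgroup

variable {G : Type*} [Group G]

theorem mem_comap_centralizer_map_mk'_iff (N : Subgroup G) [N.Normal] (H : Subgroup G) (c : G) :
    c ∈ (centralizer (H.map (QuotientGroup.mk' N))).comap (QuotientGroup.mk' N) ↔
      ∀ x ∈ H, ⁅x, c⁆ ∈ N := by
  simp only [mem_comap, mem_centralizer_iff, coe_map, Set.forall_mem_image]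
  refine forall₂_congr fun x _ => ?_
  rw [← QuotientGroup.eq_one_iff, ← QuotientGroup.mk'_apply, map_commutatorElement,
    commutatorElement_eq_one_iff_mul_comm]

theorem commutator_commutator_le_of_forall_mem {N : Subgroup G} [N.Normal]
    {H K L : Subgroup G} (h : ∀ x ∈ H, ∀ y ∈ K, ∀ z ∈ L, ⁅x, ⁅y, z⁆⁆ ∈ N) :
    ⁅H, ⁅K, L⁆⁆ ≤ N := by
  have hKL : ⁅K, L⁆ ≤ (centralizer (H.map (QuotientGroup.mk' N))).comap (QuotientGroup.mk' N) :=
    commutator_le.mpr fun y hy z hz =>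
      (mem_comap_centralizer_map_mk'_iff N H _).mpr fun x hx => h x hx y hy z hz
  exact commutator_le.mpr fun x hx c hc =>
    (mem_comap_centralizer_map_mk'_iff N H c).mp (hKL hc) x hx

end Subgroup

variable (X) in
noncomputable def ternaryHiggins : Subgroup X :=
  Subgroup.map (fold₃ : TripleCoprod X →* X)
    ((contr₁ : TripleCoprod X →* _).ker ⊓ contr₂.ker ⊓ contr₃.ker)

theorem fold₃_surjective : Function.Surjective (fold₃ : TripleCoprod X →* X) :=
  fun x => ⟨Coprod.inr x, by simp [fold₃]⟩

instance ternaryHiggins_normal : (ternaryHiggins X).Normal :=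
  Subgroup.Normal.map inferInstance _ fold₃_surjective

theorem commutatorElement_commutatorElement_mem_ternaryHiggins (x y z : X) :
    ⁅x, ⁅y, z⁆⁆ ∈ ternaryHiggins X := by
  refine ⟨⁅(Coprod.inl (Coprod.inl x) : TripleCoprod X),
    ⁅(Coprod.inl (Coprod.inr y) : TripleCoprod X), Coprod.inr z⁆⁆, ⟨⟨?_, ?_⟩, ?_⟩, ?_⟩
  · simp [map_commutatorElement, contr₁]
  · simp [map_commutatorElement, contr₂]
  · simp [map_commutatorElement, contr₃]
  · simp [map_commutatorElement, fold₃]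

/-- The iterated commutator `[X,[X,X]]` is contained in the image of
`ker π₁ ∩ ker π₂ ∩ ker π₃` under the ternary folding map `δ₃ : X ∗ X ∗ X → X`,
i.e. in the ternary Higgins commutator `[X,X,X]`. -/
theorem iterated_commutator_le_ternary_higgins :
    ⁅(⊤ : Subgroup X), ⁅(⊤ : Subgroup X), (⊤ : Subgroup X)⁆⁆ ≤
      Subgroup.map (fold₃ : TripleCoprod X →* X)
        ((contr₁ : TripleCoprod X →* _).ker ⊓ contr₂.ker ⊓ contr₃.ker) :=
  Subgroup.commutator_commutator_le_of_forall_mem (N := ternaryHiggins X)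
    fun x _ y _ z _ => commutatorElement_commutatorElement_mem_ternaryHiggins x y z
end

section
/- For any group X, the image of ker π₁ ∩ ker π₂ ∩ ker π₃ under the ternary folding map δ₃ : X ∗ X ∗ X → X equals the iterated commutator subgroup [X,[X,X]]; that is, for groups the ternary Higgins commutator coincides with the iterated commutator of length 3. -/
open Monoid

variable {X : Type u} [Group X]

/-!
`⊇`: each `contrᵢ` kills the range of `inclᵢ` and has a normal kernel, so
`⁅incl₁ X, ⁅incl₂ X, incl₃ X⁆⁆` lies in all three kernels, and `fold₃` maps it onto `⁅X, ⁅X, X⁆⁆`.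

`⊆`: passing to `X ⧸ ⁅X, ⁅X, X⁆⁆`, it suffices that for `f : X →* G` with `G` of class at most 2
the fold `lift (lift f f) f` kills the triple kernel. In such `G`, the defect of `lift f g v` from
`f (fst v) * g (snd v)` is central and is multiplicative up to the commutator
`⁅g (snd v), f (fst v')⁆`. As commutators are bilinear in class 2, the defect of the ternary fold
is the product of the defects of the binary folds after `contr₂` and `contr₁`; on the triple
kernel all of these vanish.
-/

open scoped Monoid.Coprod commutatorElement

section ClassTwo

variable {G : Type*} [Group G]

theorem mul_eq_commutatorElement_mul_mul (a b : G) : a * b = ⁅a, b⁆ * (b * a) := by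
  rw [commutatorElement_def]; group

section Defect

variable {M N : Type*} [Monoid M] [Monoid N] (f : M →* G) (g : N →* G)

def liftDefect (v : M ∗ N) : G :=
  Coprod.lift f g v * (f (Coprod.fst v) * g (Coprod.snd v))⁻¹

theorem lift_eq_liftDefect_mul (v : M ∗ N) :
    Coprod.lift f g v = liftDefect f g v * (f (Coprod.fst v) * g (Coprod.snd v)) := by
  rw [liftDefect, inv_mul_cancel_right]

@[simp] theorem liftDefect_inl (m : M) : liftDefect f g (Coprod.inl m) = 1 := by
  simp [liftDefect]

@[simp] theorem liftDefect_inr (n : N) : liftDefect f g (Coprod.inr n) = 1 := by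
  simp [liftDefect]

@[simp] theorem liftDefect_one : liftDefect f g 1 = 1 := by
  simp [liftDefect]

end Defect

variable (hG : ∀ x y : G, ⁅x, y⁆ ∈ Subgroup.center G)
include hG

theorem commutatorElement_central_mul_mul {s : G} (hs : s ∈ Subgroup.center G) (x y z : G) :
    ⁅x, s * (y * z)⁆ = ⁅x, y⁆ * ⁅x, z⁆ := by
  have hxs : ⁅x, s⁆ = 1 :=
    commutatorElement_eq_one_iff_mul_comm.2 (Subgroup.mem_center_iff.1 hs x)
  rw [commutatorElement_mul_right_eq_mul_conj, hxs, one_mul, ← Subgroup.mem_center_iff.1 hs,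
    mul_inv_cancel_right, commutatorElement_mul_right_eq_mul_conj, mul_assoc _ y,
    Subgroup.mem_center_iff.1 (hG x z) y, mul_assoc, mul_inv_cancel_right]

theorem mul_central_mul_mul (s : G) {s' : G} (hs' : s' ∈ Subgroup.center G)
    (x y x' y' : G) :
    s * (x * y) * (s' * (x' * y')) = s * s' * ⁅y, x'⁆ * (x * x' * (y * y')) := by
  have hs'_comm : x * y * s' = s' * (x * y) := Subgroup.mem_center_iff.1 hs' _
  have hyx'_comm : x * ⁅y, x'⁆ = ⁅y, x'⁆ * x := Subgroup.mem_center_iff.1 (hG y x') x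
  calc s * (x * y) * (s' * (x' * y')) = s * (x * y * s') * (x' * y') := by group
    _ = s * s' * (x * (y * x') * y') := by rw [hs'_comm]; group
    _ = s * s' * (x * ⁅y, x'⁆ * (x' * y) * y') := by
      rw [mul_eq_commutatorElement_mul_mul y x']; group
    _ = s * s' * ⁅y, x'⁆ * (x * x' * (y * y')) := by rw [hyx'_comm]; group

variable {M N : Type*} [Monoid M] [Monoid N] (f : M →* G) (g : N →* G)

theorem liftDefect_mul_of_mem_center (v : M ∗ N) {v' : M ∗ N}
    (hv' : liftDefect f g v' ∈ Subgroup.center G) :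
    liftDefect f g (v * v') =
      liftDefect f g v * liftDefect f g v' * ⁅g (Coprod.snd v), f (Coprod.fst v')⁆ := by
  rw [liftDefect, map_mul, lift_eq_liftDefect_mul f g v, lift_eq_liftDefect_mul f g v',
    mul_central_mul_mul hG _ hv']
  simp [mul_assoc]

theorem liftDefect_mem_center (v : M ∗ N) : liftDefect f g v ∈ Subgroup.center G := by
  induction v using Coprod.induction_on with
  | inl m => simp [one_mem]
  | inr n => simp [one_mem]
  | mul v v' hv hv' =>
    rw [liftDefect_mul_of_mem_center hG f g v hv']
    exact mul_mem (mul_mem hv hv') (hG _ _)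

theorem liftDefect_mul (v v' : M ∗ N) :
    liftDefect f g (v * v') =
      liftDefect f g v * liftDefect f g v' * ⁅g (Coprod.snd v), f (Coprod.fst v')⁆ :=
  liftDefect_mul_of_mem_center hG f g v (liftDefect_mem_center hG f g v')

end ClassTwo

section Ternary

@[simp] theorem fst_contr₁ (w : TripleCoprod X) :
    Coprod.fst (contr₁ w) = Coprod.snd (Coprod.fst w) :=
  DFunLike.congr_fun (show Coprod.fst.comp contr₁ = Coprod.snd.comp Coprod.fst by
    ext <;> simp [contr₁]) w

@[simp] theorem snd_contr₁ (w : TripleCoprod X) : Coprod.snd (contr₁ w) = Coprod.snd w :=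
  DFunLike.congr_fun (show Coprod.snd.comp contr₁ = Coprod.snd by ext <;> simp [contr₁]) w

@[simp] theorem fst_contr₂ (w : TripleCoprod X) :
    Coprod.fst (contr₂ w) = Coprod.fst (Coprod.fst w) :=
  DFunLike.congr_fun (show Coprod.fst.comp contr₂ = Coprod.fst.comp Coprod.fst by
    ext <;> simp [contr₂]) w

@[simp] theorem snd_contr₂ (w : TripleCoprod X) : Coprod.snd (contr₂ w) = Coprod.snd w :=
  DFunLike.congr_fun (show Coprod.snd.comp contr₂ = Coprod.snd by ext <;> simp [contr₂]) w

variable {G : Type*} [Group G] (hG : ∀ x y : G, ⁅x, y⁆ ∈ Subgroup.center G) (f : X →* G)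
include hG

theorem liftDefect_lift_lift_mul {w w' : TripleCoprod X}
    (hw : liftDefect (Coprod.lift f f) f w =
      liftDefect f f (contr₂ w) * liftDefect f f (contr₁ w))
    (hw' : liftDefect (Coprod.lift f f) f w' =
      liftDefect f f (contr₂ w') * liftDefect f f (contr₁ w')) :
    liftDefect (Coprod.lift f f) f (w * w') =
      liftDefect f f (contr₂ (w * w')) * liftDefect f f (contr₁ (w * w')) := by
  have hcomm : ⁅f (Coprod.snd w), Coprod.lift f f (Coprod.fst w')⁆ =
      ⁅f (Coprod.snd w), f (Coprod.fst (Coprod.fst w'))⁆ *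
        ⁅f (Coprod.snd w), f (Coprod.snd (Coprod.fst w'))⁆ := by
    rw [lift_eq_liftDefect_mul,
      commutatorElement_central_mul_mul hG (liftDefect_mem_center hG f f _)]
  have hcentral (z : G) {y : G} (hy : y ∈ Subgroup.center G) : Commute z y :=
    Subgroup.mem_center_iff.1 hy z
  rw [liftDefect_mul hG, hw, hw', hcomm, map_mul, map_mul, liftDefect_mul hG, liftDefect_mul hG,
    (hcentral _ (liftDefect_mem_center hG f f _)).mul_mul_mul_comm,
    (hcentral _ (hG _ _)).mul_mul_mul_comm]
  simp

theorem liftDefect_lift_lift (w : TripleCoprod X) :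
    liftDefect (Coprod.lift f f) f w =
      liftDefect f f (contr₂ w) * liftDefect f f (contr₁ w) := by
  induction w using Coprod.induction_on with
  | inl u =>
    induction u using Coprod.induction_on with
    | inl x => simp [contr₁, contr₂]
    | inr y => simp [contr₁, contr₂]
    | mul u u' hu hu' => rw [map_mul]; exact liftDefect_lift_lift_mul hG f hu hu'
  | inr z => simp [contr₁, contr₂]
  | mul w w' hw hw' => exact liftDefect_lift_lift_mul hG f hw hw'

theorem ker_contr_inf_le_ker_lift_lift :
    (contr₁ : TripleCoprod X →* _).ker ⊓ contr₂.ker ⊓ contr₃.ker ≤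
      (Coprod.lift (Coprod.lift f f) f).ker := by
  -- `contr₃` is `Coprod.fst` by definition
  rintro w ⟨⟨h₁ : contr₁ w = 1, h₂ : contr₂ w = 1⟩, h₃ : Coprod.fst w = 1⟩
  rw [MonoidHom.mem_ker, lift_eq_liftDefect_mul, liftDefect_lift_lift hG, h₁, h₂, h₃,
    ← snd_contr₁, h₁]
  simp

end Ternary

theorem commutatorElement_mem_center_quotient {N : Subgroup X} [N.Normal]
    (hN : ⁅(⊤ : Subgroup X), ⁅(⊤ : Subgroup X), (⊤ : Subgroup X)⁆⁆ ≤ N) (x y : X ⧸ N) :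
    ⁅x, y⁆ ∈ Subgroup.center (X ⧸ N) := by
  obtain ⟨x, rfl⟩ := QuotientGroup.mk'_surjective N x
  obtain ⟨y, rfl⟩ := QuotientGroup.mk'_surjective N y
  refine Subgroup.mem_center_iff.2 fun z ↦ ?_
  obtain ⟨z, rfl⟩ := QuotientGroup.mk'_surjective N z
  rw [← commutatorElement_eq_one_iff_mul_comm, ← map_commutatorElement, ← map_commutatorElement,
    ← MonoidHom.mem_ker, QuotientGroup.ker_mk']
  exact hN (Subgroup.commutator_mem_commutator trivial
    (Subgroup.commutator_mem_commutator trivial trivial))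

section Inclusions

def incl₁ : X →* TripleCoprod X := Coprod.inl.comp Coprod.inl

def incl₂ : X →* TripleCoprod X := Coprod.inl.comp Coprod.inr

def incl₃ : X →* TripleCoprod X := Coprod.inr

open Subgroup in
theorem commutator_range_incl_le_ker_contr_inf :
    ⁅(incl₁ : X →* _).range, ⁅(incl₂ : X →* _).range, (incl₃ : X →* _).range⁆⁆ ≤
      (contr₁ : TripleCoprod X →* _).ker ⊓ contr₂.ker ⊓ contr₃.ker := by
  have h₁ : (incl₁ : X →* _).range ≤ contr₁.ker := (MonoidHom.range_le_ker_iff _ _).2 rfl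
  have h₂ : (incl₂ : X →* _).range ≤ contr₂.ker := (MonoidHom.range_le_ker_iff _ _).2 rfl
  have h₃ : (incl₃ : X →* _).range ≤ contr₃.ker := (MonoidHom.range_le_ker_iff _ _).2 rfl
  refine le_inf (le_inf ?_ ?_) ?_
  · exact (commutator_mono h₁ le_rfl).trans (commutator_le_left _ _)
  · exact (commutator_mono le_rfl
      ((commutator_mono h₂ le_rfl).trans (commutator_le_left _ _))).trans (commutator_le_right _ _)
  · exact (commutator_mono le_rfl
      ((commutator_mono le_rfl h₃).trans (commutator_le_right _ _))).trans (commutator_le_right _ _)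

theorem map_fold₃_commutator_range_incl :
    ⁅(incl₁ : X →* _).range, ⁅(incl₂ : X →* _).range, (incl₃ : X →* _).range⁆⁆.map fold₃ =
      ⁅(⊤ : Subgroup X), ⁅(⊤ : Subgroup X), (⊤ : Subgroup X)⁆⁆ := by
  have map_range_eq_top (i : X →* TripleCoprod X) (hi : fold₃.comp i = .id X) :
      i.range.map fold₃ = ⊤ := by
    rw [MonoidHom.map_range, hi]
    exact MonoidHom.range_eq_top.2 Function.surjective_id
  rw [Subgroup.map_commutator, Subgroup.map_commutator, map_range_eq_top incl₁ rfl,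
    map_range_eq_top incl₂ rfl, map_range_eq_top incl₃ rfl]

end Inclusions

/-- For groups, the ternary Higgins commutator `[X,X,X]`, i.e. the image of
`ker π₁ ∩ ker π₂ ∩ ker π₃` under the ternary folding map `δ₃ : X ∗ X ∗ X → X`,
equals the iterated commutator `[X,[X,X]]`. -/
theorem ternary_higgins_eq_iterated_commutator :
    Subgroup.map (fold₃ : TripleCoprod X →* X)
        ((contr₁ : TripleCoprod X →* _).ker ⊓ contr₂.ker ⊓ contr₃.ker) =
      ⁅(⊤ : Subgroup X), ⁅(⊤ : Subgroup X), (⊤ : Subgroup X)⁆⁆ := by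
  refine le_antisymm ?_ (map_fold₃_commutator_range_incl.ge.trans
    (Subgroup.map_mono commutator_range_incl_le_ker_contr_inf))
  set N := ⁅(⊤ : Subgroup X), ⁅(⊤ : Subgroup X), (⊤ : Subgroup X)⁆⁆
  have hfold : (QuotientGroup.mk' N).comp fold₃ =
      Coprod.lift (Coprod.lift (QuotientGroup.mk' N) (QuotientGroup.mk' N))
        (QuotientGroup.mk' N) := by
    ext <;> rfl
  rw [Subgroup.map_le_iff_le_comap, ← QuotientGroup.ker_mk' N, MonoidHom.comap_ker, hfold]
  exact ker_contr_inf_le_ker_lift_lift (commutatorElement_mem_center_quotient le_rfl) _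
end

section
/- A pointed category with binary products in which every object X carries a natural Mal'tsev operation p : X × X × X → X satisfying p(x,y,y) = x and p(x,x,y) = y (natural in X) is such that every object carries a unique internal abelian group structure; concretely, in the category of models of an algebraic theory containing a constant 0 and a Mal'tsev term p, the operation x + y := p(x,0,y) makes every model an abelian group whose operations are homomorphisms. -/
/-! Instantiating the middle-interchange law at matrices filled mostly with the base point `z`
and simplifying with the Mal'tsev identities yields each group law of `x + y := p x z y` in one
step; the inverse of `x` is `p z x z`, read `z - x + z`. Uniqueness is the same trick applied to
a compatible unital magma: `x ∗ y = (p x z z) ∗ (p z z y) = p (x ∗ z) (z ∗ z) (z ∗ y)`. -/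

variable {X : Type*}

structure IsMaltsev (p : X → X → X → X) : Prop where
  left : ∀ x y, p x x y = y
  right : ∀ x y, p x y y = x

def MiddleInterchange (p : X → X → X → X) : Prop :=
  ∀ a b c d e f g h i : X,
    p (p a b c) (p d e f) (p g h i) = p (p a d g) (p b e h) (p c f i)

namespace IsMaltsev

variable {p : X → X → X → X}

theorem comm (hp : IsMaltsev p) (hi : MiddleInterchange p) (w x y : X) :
    p x w y = p y w x := by
  simpa only [hp.left, hp.right] using hi w w x w w w y w w

theorem assoc (hp : IsMaltsev p) (hi : MiddleInterchange p) (w x y v : X) :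
    p (p x w y) w v = p x w (p y w v) := by
  simpa only [hp.left, hp.right] using hi x w y w w w w w v

theorem add_neg (hp : IsMaltsev p) (hi : MiddleInterchange p) (w x : X) :
    p x w (p w x w) = w := by
  simpa only [hp.left, hp.right] using (hi x w w w w x w w w).symm

theorem neg_add (hp : IsMaltsev p) (hi : MiddleInterchange p) (w x : X) :
    p (p w x w) w x = w :=
  (hp.comm hi w _ x).trans (hp.add_neg hi w x)

theorem add_map (hp : IsMaltsev p) (hi : MiddleInterchange p) (w a b c d e f : X) :
    p (p a b c) w (p d e f) = p (p a w d) (p b w e) (p c w f) := by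
  simpa only [hp.left, hp.right] using hi a b c w w w d e f

theorem eq_of_unital_of_map (hp : IsMaltsev p) {w : X} {add : X → X → X}
    (hr : ∀ x, add x w = x) (hl : ∀ x, add w x = x)
    (hmap : ∀ a b c d e f : X, add (p a b c) (p d e f) = p (add a d) (add b e) (add c f))
    (x y : X) : add x y = p x w y := by
  simpa only [hp.left, hp.right, hr, hl] using hmap x w w w w y

end IsMaltsev

/-- If a pointed set `X` (with base point `z`) carries a Mal'tsev operation `p` satisfying
`p x y y = x`, `p x x y = y` and the middle-interchange law (naturality: `p` is a homomorphism
with respect to itself), then `x + y := p x z y` makes `X` an abelian group whose operations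
are homomorphisms, and this abelian group structure is unique among unital magma structures
with unit `z` compatible with `p`. -/
theorem maltsev_operation_gives_unique_abelian_group
    {X : Type u} (z : X) (p : X → X → X → X)
    (hright : ∀ x y : X, p x y y = x)
    (hleft : ∀ x y : X, p x x y = y)
    (hinterchange : ∀ a b c d e f g h i : X,
      p (p a b c) (p d e f) (p g h i) = p (p a d g) (p b e h) (p c f i)) :
    -- `x + y := p x z y` is commutative
    (∀ x y : X, p x z y = p y z x) ∧
    -- associative
    (∀ x y w : X, p (p x z y) z w = p x z (p y z w)) ∧
    -- `z` is a two-sided unit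
    (∀ x : X, p x z z = x) ∧ (∀ x : X, p z z x = x) ∧
    -- every element has an inverse
    (∀ x : X, ∃ y : X, p x z y = z ∧ p y z x = z) ∧
    -- the addition is a homomorphism with respect to `p`
    (∀ a b c d e f : X,
      p (p a b c) z (p d e f) = p (p a z d) (p b z e) (p c z f)) ∧
    -- uniqueness: any unital magma structure with unit `z` compatible with `p` coincides
    (∀ add' : X → X → X,
      (∀ x : X, add' x z = x) → (∀ x : X, add' z x = x) →
      (∀ a b c d e f : X,
        add' (p a b c) (p d e f) = p (add' a d) (add' b e) (add' c f)) →
      ∀ x y : X, add' x y = p x z y) := by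
  have hp : IsMaltsev p := ⟨hleft, hright⟩
  exact ⟨hp.comm hinterchange z, hp.assoc hinterchange z, fun x => hright x z,
    fun x => hleft z x,
    fun x => ⟨p z x z, hp.add_neg hinterchange z x, hp.neg_add hinterchange z x⟩,
    hp.add_map hinterchange z, fun _ => hp.eq_of_unital_of_map⟩
end

section
/- Let G₀ be a group with an action of the symmetric group S₃ by automorphisms such that for every g ∈ G₀, every transposition σ ∈ S₃ and every 3-cycle ρ ∈ S₃, the triality identity [σ,g] · (ρ·[σ,g]) · (ρ²·[σ,g]) = 1 holds, where [σ,g] = (σ·g)g⁻¹. Then in the semidirect product G = G₀ ⋊ S₃, for any two elements g, h of G that are conjugate to elements of order 2 in the subgroup 1 ⋊ S₃ and whose projections to S₃ are distinct, one has (gh)³ = 1. -/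
/-!
Conjugating by the first conjugator we may assume `g = (1, σ)` and `h = (x, 1)(1, τ)(x, 1)⁻¹`
with `σ ≠ τ` transpositions. Then `gh = (v, ρ)` with `ρ = στ` a 3-cycle and
`v = σ·x · ρ·x⁻¹ = [στσ, ρ·x]`, so `(gh)³ = (v · ρ·v · ρ²·v, ρ³)` is trivial by the triality
identity for the transposition `στσ` and the 3-cycle `ρ`.
-/

open Equiv SemidirectProduct

theorem Equiv.Perm.fin_three_mul_pow_three_eq_one :
    ∀ σ τ : Perm (Fin 3), σ ≠ 1 → σ ^ 2 = 1 → τ ≠ 1 → τ ^ 2 = 1 → (σ * τ) ^ 3 = 1 := by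
  decide

namespace SemidirectProduct

variable {N G : Type*} [Group N] [Group G] {φ : G →* MulAut N}

theorem inr_mul_inl (g : G) (n : N) : (inr g * inl n : N ⋊[φ] G) = inl (φ g n) * inr g := by
  rw [inl_aut, map_inv, inv_mul_cancel_right]

theorem inl_mul_inr_pow_three (n : N) (g : G) :
    (inl n * inr g : N ⋊[φ] G) ^ 3 = inl (n * φ g n * φ (g ^ 2) n) * inr (g ^ 3) := by
  ext <;> simp [pow_succ, mul_assoc]

theorem conj_inr (e : N ⋊[φ] G) (g : G) :
    e * inr g * e⁻¹ = inl e.left * inr (e.right * g * e.right⁻¹) * (inl e.left)⁻¹ := by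
  conv_lhs => rw [← inl_left_mul_inr_right e]
  simp only [map_mul, map_inv]
  group

end SemidirectProduct

def HasTriality {G₀ : Type*} [Group G₀] (φ : Perm (Fin 3) →* MulAut G₀) : Prop :=
  ∀ (g : G₀) (σ ρ : Perm (Fin 3)), σ ≠ 1 → σ ^ 2 = 1 → ρ ≠ 1 → ρ ^ 3 = 1 →
    (φ σ g * g⁻¹) * φ ρ (φ σ g * g⁻¹) * φ (ρ ^ 2) (φ σ g * g⁻¹) = 1

theorem HasTriality.inr_mul_conj_inr_pow_three {G₀ : Type*} [Group G₀]
    {φ : Perm (Fin 3) →* MulAut G₀} (htri : HasTriality φ) {σ τ : Perm (Fin 3)}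
    (hσ : σ ≠ 1) (hσ2 : σ ^ 2 = 1) (hτ : τ ≠ 1) (hτ2 : τ ^ 2 = 1) (hne : σ ≠ τ) (x : G₀) :
    (inr σ * (inl x * inr τ * (inl x)⁻¹) : G₀ ⋊[φ] Perm (Fin 3)) ^ 3 = 1 := by
  set ρ := σ * τ
  have hρ : ρ ≠ 1 := fun h => hne (by
    rw [← inv_eq_of_mul_eq_one_right h, inv_eq_of_mul_eq_one_right (pow_two σ ▸ hσ2)])
  have hρ3 : ρ ^ 3 = 1 := Perm.fin_three_mul_pow_three_eq_one σ τ hσ hσ2 hτ hτ2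
  have hprod : (inr σ * (inl x * inr τ * (inl x)⁻¹) : G₀ ⋊[φ] Perm (Fin 3))
      = inl (φ σ x * φ ρ x⁻¹) * inr ρ := by
    rw [← map_inv, ← mul_assoc, ← mul_assoc, inr_mul_inl, mul_assoc _ (inr σ), ← map_mul,
      mul_assoc, inr_mul_inl, ← mul_assoc, ← map_mul]
  have hcomm : φ σ x * φ ρ x⁻¹ = φ (σ * τ * σ⁻¹) (φ ρ x) * (φ ρ x)⁻¹ := by
    rw [map_inv, ← MulAut.mul_apply, ← map_mul, mul_assoc _ _ ρ, inv_mul_cancel_left, mul_assoc,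
      ← pow_two, hτ2, mul_one]
  have hμ : σ * τ * σ⁻¹ ≠ 1 := by rwa [Ne, conj_eq_one_iff]
  have hμ2 : (σ * τ * σ⁻¹) ^ 2 = 1 := by rw [conj_pow, hτ2, mul_one, mul_inv_cancel]
  rw [hprod, inl_mul_inr_pow_three, hρ3, hcomm, htri _ _ ρ hμ hμ2 hρ hρ3, map_one, map_one,
    one_mul]

/-- Doro/Hall/Liebeck: if `G₀` is a group with triality, i.e. carries an action of `S₃` by
automorphisms such that `[σ,g]·(ρ·[σ,g])·(ρ²·[σ,g]) = 1` for every `g`, every transposition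
`σ` (element of order 2) and every 3-cycle `ρ` (element of order 3), then in the semidirect
product `G = G₀ ⋊ S₃` any two special elements (conjugates of order-2 elements of `S₃`)
with distinct projections to `S₃` satisfy `(gh)³ = 1`. -/
theorem triality_group_condition
    {G₀ : Type u} [Group G₀] (φ : Equiv.Perm (Fin 3) →* MulAut G₀)
    (htri : ∀ (g : G₀) (σ ρ : Equiv.Perm (Fin 3)),
      σ ≠ 1 → σ ^ 2 = 1 → ρ ≠ 1 → ρ ^ 3 = 1 →
      (φ σ g * g⁻¹) * φ ρ (φ σ g * g⁻¹) * φ (ρ ^ 2) (φ σ g * g⁻¹) = 1) :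
    ∀ g h : SemidirectProduct G₀ (Equiv.Perm (Fin 3)) φ,
      (∃ (c : SemidirectProduct G₀ (Equiv.Perm (Fin 3)) φ) (σ : Equiv.Perm (Fin 3)),
        σ ≠ 1 ∧ σ ^ 2 = 1 ∧ g = c * SemidirectProduct.inr σ * c⁻¹) →
      (∃ (c : SemidirectProduct G₀ (Equiv.Perm (Fin 3)) φ) (σ : Equiv.Perm (Fin 3)),
        σ ≠ 1 ∧ σ ^ 2 = 1 ∧ h = c * SemidirectProduct.inr σ * c⁻¹) →
      SemidirectProduct.rightHom g ≠ SemidirectProduct.rightHom h →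
      (g * h) ^ 3 = 1 := by
  rintro _ _ ⟨c, σ, hσ, hσ2, rfl⟩ ⟨d, τ, hτ, hτ2, rfl⟩ hne
  set e := c⁻¹ * d with he
  have hne' : σ ≠ e.right * τ * e.right⁻¹ := fun h => hne (by
    simp only [map_mul, map_inv, rightHom_inr, rightHom_eq_right, h, e, mul_right, inv_right]
    group)
  have hprod : c * inr σ * c⁻¹ * (d * inr τ * d⁻¹) = c * (inr σ * (e * inr τ * e⁻¹)) * c⁻¹ := by
    rw [he]; group
  rw [hprod, conj_pow, conj_inr, HasTriality.inr_mul_conj_inr_pow_three htri hσ hσ2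
    (by rwa [Ne, conj_eq_one_iff]) (by rw [conj_pow, hτ2, mul_one, mul_inv_cancel]) hne',
    mul_one, mul_inv_cancel]
end

section
/- In the category of groups, for any group Z the pullback functor along the terminal map (sending a group X to the projection X × Z → Z with its canonical section) preserves binary sums of points over Z: the canonical homomorphism (X × Z) ∗_Z (Y × Z) → (X ∗ Y) × Z from the amalgamated free product over Z is an isomorphism. -/
/-!
The inverse sends `(w, z)` to `ι w * base z`, where `ι : X ∗ Y → (X × Z) ∗_Z (Y × Z)` sends
`x ↦ (x, 1)` and `y ↦ (y, 1)`. This is a homomorphism on the direct product because the image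
of `ι` lies in the centralizer of the image of `Z`: it is generated by elements `(x, 1)` and
`(y, 1)`, which already commute with `(1, z)` in `X × Z` and `Y × Z`.
-/

open Monoid

variable (X Y Z : Type u) [Group X] [Group Y] [Group Z]

/-- The two-member family of points `X × Z → Z` and `Y × Z → Z` over `Z`. -/
def distribFam : Bool → Type u
  | true => X × Z
  | false => Y × Z

instance distribFamGroup : ∀ b, Group (distribFam X Y Z b)
  | true => inferInstanceAs (Group (X × Z))
  | false => inferInstanceAs (Group (Y × Z))

/-- The canonical sections `Z → X × Z` and `Z → Y × Z`. -/
def distribBase : ∀ b, Z →* distribFam X Y Z b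
  | true => MonoidHom.inr X Z
  | false => MonoidHom.inr Y Z

/-- The legs `X × Z → (X ∗ Y) × Z` and `Y × Z → (X ∗ Y) × Z` of the comparison cocone. -/
def distribLeg : ∀ b, distribFam X Y Z b →* Monoid.Coprod X Y × Z
  | true => (Coprod.inl : X →* Monoid.Coprod X Y).prodMap (MonoidHom.id Z)
  | false => (Coprod.inr : Y →* Monoid.Coprod X Y).prodMap (MonoidHom.id Z)

theorem distribLeg_comp_base :
    ∀ b, (distribLeg X Y Z b).comp (distribBase X Y Z b) =
      MonoidHom.inr (Monoid.Coprod X Y) Z := by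
  intro b
  cases b
  · exact show ((Coprod.inr : Y →* Monoid.Coprod X Y).prodMap (MonoidHom.id Z)).comp
        (MonoidHom.inr Y Z) = MonoidHom.inr (Monoid.Coprod X Y) Z by ext z <;> simp
  · exact show ((Coprod.inl : X →* Monoid.Coprod X Y).prodMap (MonoidHom.id Z)).comp
        (MonoidHom.inr X Z) = MonoidHom.inr (Monoid.Coprod X Y) Z by ext z <;> simp

namespace Monoid.PushoutI

theorem commute_of_base {ι H : Type*} {G : ι → Type*} [∀ i, Monoid (G i)] [Monoid H]
    {φ : ∀ i, H →* G i} {i : ι} {g : G i} {h : H} (hg : Commute g (φ i h)) :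
    Commute (of i g) (base φ h) := by
  rw [← of_apply_eq_base φ i h]
  exact hg.map (of i)

theorem of_mul_base {ι H : Type*} {G : ι → Type*} [∀ i, Monoid (G i)] [Monoid H]
    {φ : ∀ i, H →* G i} (i : ι) (g : G i) (h : H) :
    of i g * base φ h = of i (g * φ i h) := by
  rw [← of_apply_eq_base φ i h, map_mul]

end Monoid.PushoutI

def coprodToPushout : Coprod X Y →* PushoutI (distribBase X Y Z) :=
  Coprod.lift ((PushoutI.of (φ := distribBase X Y Z) true).comp (MonoidHom.inl X Z))
    ((PushoutI.of (φ := distribBase X Y Z) false).comp (MonoidHom.inl Y Z))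

theorem coprodToPushout_mem_centralizer (c : Coprod X Y) :
    coprodToPushout X Y Z c ∈
      Submonoid.centralizer (Set.range (PushoutI.base (distribBase X Y Z))) := by
  suffices MonoidHom.mrange (coprodToPushout X Y Z) ≤ Submonoid.centralizer _ from
    this ⟨c, rfl⟩
  rw [Coprod.mrange_eq, sup_le_iff]
  constructor <;> rintro _ ⟨g, rfl⟩ _ ⟨z, rfl⟩ <;>
    exact (PushoutI.commute_of_base (MonoidHom.commute_inl_inr g z)).eq.symm

def prodToPushout : Coprod X Y × Z →* PushoutI (distribBase X Y Z) :=
  (coprodToPushout X Y Z).noncommCoprod (PushoutI.base _) fun c z =>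
    Commute.symm <|
      Submonoid.mem_centralizer_iff.mp (coprodToPushout_mem_centralizer X Y Z c) _ ⟨z, rfl⟩

theorem lift_comp_coprodToPushout :
    (PushoutI.lift (distribLeg X Y Z) (MonoidHom.inr (Coprod X Y) Z)
      (distribLeg_comp_base X Y Z)).comp (coprodToPushout X Y Z) = MonoidHom.inl _ _ :=
  Coprod.hom_ext rfl rfl

theorem lift_comp_prodToPushout :
    (PushoutI.lift (distribLeg X Y Z) (MonoidHom.inr (Coprod X Y) Z)
      (distribLeg_comp_base X Y Z)).comp (prodToPushout X Y Z) = MonoidHom.id _ := by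
  refine (MonoidHom.comp_noncommCoprod _ _ _ _).trans ?_
  rw [← MonoidHom.noncommCoprod_unique (MonoidHom.id (Coprod X Y × Z))]
  -- the `base` components agree definitionally
  congr 1
  exact lift_comp_coprodToPushout X Y Z

theorem prodToPushout_comp_distribLeg (b : Bool) :
    (prodToPushout X Y Z).comp (distribLeg X Y Z b) = PushoutI.of b := by
  cases b <;> ext1 ⟨g, z⟩ <;>
  · refine (PushoutI.of_mul_base _ _ _).trans (congrArg _ ?_)
    exact Prod.ext (mul_one g) (one_mul z)

theorem prodToPushout_comp_lift :
    (prodToPushout X Y Z).comp (PushoutI.lift (distribLeg X Y Z)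
      (MonoidHom.inr (Coprod X Y) Z) (distribLeg_comp_base X Y Z)) = MonoidHom.id _ :=
  PushoutI.hom_ext_nonempty fun b => prodToPushout_comp_distribLeg X Y Z b

/-- Algebraic distributivity of the category of groups: the canonical homomorphism
`(X × Z) ∗_Z (Y × Z) → (X ∗ Y) × Z` from the amalgamated free product of the points
`X × Z → Z` and `Y × Z → Z` over `Z` is an isomorphism. -/
theorem amalgamated_product_of_points_iso_product_of_coprod :
    Function.Bijective
      (Monoid.PushoutI.lift (distribLeg X Y Z) (MonoidHom.inr (Monoid.Coprod X Y) Z)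
        (distribLeg_comp_base X Y Z)) :=
  (MonoidHom.toMulEquiv _ _ (prodToPushout_comp_lift X Y Z)
    (lift_comp_prodToPushout X Y Z)).bijective
end

section
/- Let 1 → F₁ → F → F₂ → 1 be a short exact sequence of functors from groups to groups (pointwise short exact: for each group X, F₁(X) is a normal subgroup of F(X) with quotient F₂(X), naturally in X). For groups X, Y define cr₂^G(X,Y) = ker(G(X ∗ Y) → G(X) × G(Y)) for a functor G with G(1)=1. Then for all X, Y there is a short exact sequence 1 → cr₂^{F₁}(X,Y) → cr₂^{F}(X,Y) → cr₂^{F₂}(X,Y) → 1; in particular cr₂^F vanishes identically iff both cr₂^{F₁} and cr₂^{F₂} do, i.e. F is linear iff F₁ and F₂ are. -/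
/-! Naturality makes `ι` and `π` restrict to the cross-effects, and `ι` reflects them since it
is injective on `X` and `Y`; this gives everything but surjectivity onto `cr₂F₂`. For that,
as `F₁` kills the trivial group, `crMap F₁` has the section `(a, b) ↦ F₁(inl) a * F₁(inr) b`.
Any lift `w₀ ∈ F(X ∗ Y)` of `v ∈ cr₂F₂` has `crMap F w₀` in `ker π × ker π = ι F₁(X) × ι F₁(Y)`,
so dividing `w₀` by `ι` of the section at the corresponding point lands in `cr₂F` and still
lifts `v`. -/

open Monoid CategoryTheory

universe u

/-- The map `G(X ∗ Y) → G(X) × G(Y)` induced by the two contractions of the free product;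
its kernel is the second cross-effect `cr₂G(X,Y)` of the endofunctor `G` of groups. -/
noncomputable def crMap (G : GrpCat.{u} ⥤ GrpCat.{u}) (X Y : Type u) [Group X] [Group Y] :
    G.obj (GrpCat.of (Monoid.Coprod X Y)) →* G.obj (GrpCat.of X) × G.obj (GrpCat.of Y) :=
  (G.map (GrpCat.ofHom (Coprod.lift (MonoidHom.id X) 1))).hom.prod
    (G.map (GrpCat.ofHom (Coprod.lift 1 (MonoidHom.id Y)))).hom

lemma Subgroup.eq_bot_iff_of_exact {A B C : Type*} [Group A] [Group B] [Group C]
    (f : A →* B) (g : B →* C) (hf : Function.Injective f) {KA : Subgroup A} {KB : Subgroup B}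
    {KC : Subgroup C} (hfK : ∀ a ∈ KA, f a ∈ KB) (hgK : ∀ b ∈ KB, g b ∈ KC)
    (hg : ∀ c ∈ KC, ∃ b ∈ KB, g b = c) (hexact : ∀ b ∈ KB, g b = 1 → ∃ a ∈ KA, f a = b) :
    KB = ⊥ ↔ KA = ⊥ ∧ KC = ⊥ := by
  simp only [Subgroup.eq_bot_iff_forall]
  refine ⟨fun hB => ⟨fun a ha => hf ?_, fun c hc => ?_⟩, fun ⟨hA, hC⟩ b hb => ?_⟩
  · rw [hB _ (hfK a ha), map_one]
  · obtain ⟨b, hb, rfl⟩ := hg c hc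
    rw [hB b hb, map_one]
  · obtain ⟨a, ha, rfl⟩ := hexact b hb (hC _ (hgK b hb))
    rw [hA a ha, map_one]

namespace GrpCat

lemma map_ofHom_one_apply (G : GrpCat.{u} ⥤ GrpCat.{u})
    [Subsingleton (G.obj (GrpCat.of PUnit))] {X Y : Type u} [Group X] [Group Y]
    (g : G.obj (GrpCat.of X)) : G.map (GrpCat.ofHom (1 : X →* Y)) g = 1 := by
  have hfac : GrpCat.ofHom (1 : X →* Y) =
      GrpCat.ofHom (1 : X →* PUnit) ≫ GrpCat.ofHom (1 : PUnit →* Y) := rfl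
  rw [hfac, Functor.map_comp, ConcreteCategory.comp_apply, Subsingleton.elim
    (G.map (GrpCat.ofHom (1 : X →* PUnit)) g) 1, map_one]

end GrpCat

section CrossEffect

variable {X Y : Type u} [Group X] [Group Y]

lemma crMap_app {G H : GrpCat.{u} ⥤ GrpCat.{u}} (η : G ⟶ H)
    (w : G.obj (GrpCat.of (Coprod X Y))) :
    crMap H X Y (η.app _ w) =
      (η.app (GrpCat.of X)).hom.prodMap (η.app (GrpCat.of Y)).hom (crMap G X Y w) := by
  simp [crMap]

lemma crMap_map_inl_mul_map_inr (G : GrpCat.{u} ⥤ GrpCat.{u})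
    [Subsingleton (G.obj (GrpCat.of PUnit))] (a : G.obj (GrpCat.of X)) (b : G.obj (GrpCat.of Y)) :
    crMap G X Y (G.map (GrpCat.ofHom Coprod.inl) a * G.map (GrpCat.ofHom Coprod.inr) b) =
      (a, b) := by
  have hXX : GrpCat.ofHom (Coprod.inl : X →* Coprod X Y) ≫
      GrpCat.ofHom (Coprod.lift (MonoidHom.id X) 1) = 𝟙 _ := rfl
  have hYX : GrpCat.ofHom (Coprod.inr : Y →* Coprod X Y) ≫
      GrpCat.ofHom (Coprod.lift (MonoidHom.id X) 1) = GrpCat.ofHom 1 := rfl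
  have hXY : GrpCat.ofHom (Coprod.inl : X →* Coprod X Y) ≫
      GrpCat.ofHom (Coprod.lift 1 (MonoidHom.id Y)) = GrpCat.ofHom 1 := rfl
  have hYY : GrpCat.ofHom (Coprod.inr : Y →* Coprod X Y) ≫
      GrpCat.ofHom (Coprod.lift 1 (MonoidHom.id Y)) = 𝟙 _ := rfl
  simp only [crMap, MonoidHom.prod_apply, map_mul, ← ConcreteCategory.comp_apply,
    ← Functor.map_comp, hXX, hYX, hXY, hYY, CategoryTheory.Functor.map_id,
    GrpCat.map_ofHom_one_apply, ConcreteCategory.id_apply, Prod.mk_mul_mk, mul_one, one_mul]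

lemma app_mem_ker_crMap {G H : GrpCat.{u} ⥤ GrpCat.{u}} (η : G ⟶ H)
    {w : G.obj (GrpCat.of (Coprod X Y))} (hw : w ∈ (crMap G X Y).ker) :
    η.app _ w ∈ (crMap H X Y).ker := by
  rw [MonoidHom.mem_ker, crMap_app, hw, map_one]

lemma app_mem_ker_crMap_iff {G H : GrpCat.{u} ⥤ GrpCat.{u}} (η : G ⟶ H)
    (hX : Function.Injective (η.app (GrpCat.of X)))
    (hY : Function.Injective (η.app (GrpCat.of Y))) (w : G.obj (GrpCat.of (Coprod X Y))) :
    η.app _ w ∈ (crMap H X Y).ker ↔ w ∈ (crMap G X Y).ker := by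
  rw [MonoidHom.mem_ker, MonoidHom.mem_ker, crMap_app]
  exact map_eq_one_iff _ (Prod.map_injective.2 ⟨hX, hY⟩)

section Exact

variable {F₁ F F₂ : GrpCat.{u} ⥤ GrpCat.{u}} (ι : F₁ ⟶ F) (π : F ⟶ F₂)

lemma exists_mem_ker_crMap_app_eq
    (hexact : ∀ A : GrpCat.{u}, (π.app A).hom.ker = (ι.app A).hom.range)
    [Subsingleton (F₁.obj (GrpCat.of PUnit))]
    (hsurj : Function.Surjective (π.app (GrpCat.of (Coprod X Y))))
    {v : F₂.obj (GrpCat.of (Coprod X Y))} (hv : v ∈ (crMap F₂ X Y).ker) :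
    ∃ w ∈ (crMap F X Y).ker, π.app _ w = v := by
  obtain ⟨w₀, rfl⟩ := hsurj v
  have hw₀ : crMap F X Y w₀ ∈
      ((ι.app (GrpCat.of X)).hom.prodMap (ι.app (GrpCat.of Y)).hom).range := by
    rw [MonoidHom.range_prodMap, ← hexact, ← hexact, ← MonoidHom.ker_prodMap,
      MonoidHom.mem_ker, ← crMap_app, hv]
  obtain ⟨⟨a, b⟩, hab⟩ := hw₀
  let c := ι.app _ (F₁.map (GrpCat.ofHom (Coprod.inl : X →* Coprod X Y)) a *
    F₁.map (GrpCat.ofHom (Coprod.inr : Y →* Coprod X Y)) b)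
  refine ⟨w₀ * c⁻¹, ?_, ?_⟩
  · rw [MonoidHom.mem_ker, map_mul, map_inv, crMap_app, crMap_map_inl_mul_map_inr, hab,
      mul_inv_cancel]
  · rw [map_mul, map_inv, (hexact _).ge ⟨_, rfl⟩, inv_one, mul_one]

lemma app_eq_one_iff_exists_mem_ker_crMap
    (hexact : ∀ A : GrpCat.{u}, (π.app A).hom.ker = (ι.app A).hom.range)
    (hinj : ∀ A : GrpCat.{u}, Function.Injective (ι.app A))
    {w : F.obj (GrpCat.of (Coprod X Y))} (hw : w ∈ (crMap F X Y).ker) :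
    π.app _ w = 1 ↔ ∃ u ∈ (crMap F₁ X Y).ker, ι.app _ u = w := by
  refine ⟨fun hπ => ?_, fun ⟨u, _, hu⟩ => hu ▸ (hexact _).ge ⟨u, rfl⟩⟩
  obtain ⟨u, rfl⟩ : w ∈ (ι.app _).hom.range := hexact _ ▸ hπ
  exact ⟨u, (app_mem_ker_crMap_iff ι (hinj _) (hinj _) u).1 hw, rfl⟩

lemma crMap_ker_exact
    (hexact : ∀ A : GrpCat.{u}, (π.app A).hom.ker = (ι.app A).hom.range)
    [Subsingleton (F₁.obj (GrpCat.of PUnit))]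
    (hinj : ∀ A : GrpCat.{u}, Function.Injective (ι.app A))
    (hsurj : ∀ A : GrpCat.{u}, Function.Surjective (π.app A)) :
    (∀ w ∈ (crMap F₁ X Y).ker, ι.app (GrpCat.of (Coprod X Y)) w ∈ (crMap F X Y).ker) ∧
      (∀ w ∈ (crMap F X Y).ker, π.app (GrpCat.of (Coprod X Y)) w ∈ (crMap F₂ X Y).ker) ∧
      (∀ v ∈ (crMap F₂ X Y).ker,
        ∃ w ∈ (crMap F X Y).ker, π.app (GrpCat.of (Coprod X Y)) w = v) ∧
      (∀ w ∈ (crMap F X Y).ker,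
        (π.app (GrpCat.of (Coprod X Y)) w = 1 ↔
          ∃ u ∈ (crMap F₁ X Y).ker, ι.app (GrpCat.of (Coprod X Y)) u = w)) :=
  ⟨fun _ => app_mem_ker_crMap ι, fun _ => app_mem_ker_crMap π,
    fun _ => exists_mem_ker_crMap_app_eq ι π hexact (hsurj _),
    fun _ => app_eq_one_iff_exists_mem_ker_crMap ι π hexact hinj⟩

end Exact

end CrossEffect

theorem cross_effect_ses_of_ses_of_functors_general
    (F₁ F F₂ : GrpCat.{u} ⥤ GrpCat.{u}) (ι : F₁ ⟶ F) (π : F ⟶ F₂)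
    (hinj : ∀ A : GrpCat.{u}, Function.Injective (ι.app A))
    (hsurj : ∀ A : GrpCat.{u}, Function.Surjective (π.app A))
   
    (hexact : ∀ A : GrpCat.{u}, (π.app A).hom.ker = (ι.app A).hom.range)
    (h₁ : Subsingleton (F₁.obj (GrpCat.of PUnit))) :
    (∀ (X Y : Type u) (_ : Group X) (_ : Group Y),
      (∀ w ∈ (crMap F₁ X Y).ker,
        ι.app (GrpCat.of (Monoid.Coprod X Y)) w ∈ (crMap F X Y).ker) ∧
      (∀ w ∈ (crMap F X Y).ker,
        π.app (GrpCat.of (Monoid.Coprod X Y)) w ∈ (crMap F₂ X Y).ker) ∧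
      (∀ v ∈ (crMap F₂ X Y).ker,
        ∃ w ∈ (crMap F X Y).ker, π.app (GrpCat.of (Monoid.Coprod X Y)) w = v) ∧
      (∀ w ∈ (crMap F X Y).ker,
        (π.app (GrpCat.of (Monoid.Coprod X Y)) w = 1 ↔
          ∃ u ∈ (crMap F₁ X Y).ker, ι.app (GrpCat.of (Monoid.Coprod X Y)) u = w))) ∧
    ((∀ (X Y : Type u) (_ : Group X) (_ : Group Y), (crMap F X Y).ker = ⊥) ↔
      ((∀ (X Y : Type u) (_ : Group X) (_ : Group Y), (crMap F₁ X Y).ker = ⊥) ∧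
        (∀ (X Y : Type u) (_ : Group X) (_ : Group Y), (crMap F₂ X Y).ker = ⊥))) := by
  have ses := fun (X Y : Type u) (_ : Group X) (_ : Group Y) =>
    crMap_ker_exact (X := X) (Y := Y) ι π hexact hinj hsurj
  refine ⟨ses, ?_⟩
  simp only [← forall_and]
  refine forall_congr' fun X => forall_congr' fun Y =>
    forall_congr' fun _ => forall_congr' fun _ => ?_
  obtain ⟨hι, hπ, hlift, hmid⟩ := ses X Y _ _
  exact Subgroup.eq_bot_iff_of_exact _ _ (hinj _) hι hπ hlift fun w hw => (hmid w hw).1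

/-- Given a pointwise short exact sequence `1 → F₁ → F → F₂ → 1` of endofunctors of groups
preserving the trivial group, for all groups `X, Y` the second cross-effects fit in a short
exact sequence `1 → cr₂F₁(X,Y) → cr₂F(X,Y) → cr₂F₂(X,Y) → 1`; in particular `F` is linear
(all second cross-effects vanish) iff both `F₁` and `F₂` are. -/
theorem cross_effect_ses_of_ses_of_functors
    (F₁ F F₂ : GrpCat.{u} ⥤ GrpCat.{u}) (ι : F₁ ⟶ F) (π : F ⟶ F₂)
    (hinj : ∀ A : GrpCat.{u}, Function.Injective (ι.app A))
    (hsurj : ∀ A : GrpCat.{u}, Function.Surjective (π.app A))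
    (hexact : ∀ A : GrpCat.{u}, (π.app A).hom.ker = (ι.app A).hom.range)
    (h₁ : Subsingleton (F₁.obj (GrpCat.of PUnit)))
    (h : Subsingleton (F.obj (GrpCat.of PUnit)))
    (h₂ : Subsingleton (F₂.obj (GrpCat.of PUnit))) :
    (∀ (X Y : Type u) (_ : Group X) (_ : Group Y),
      (∀ w ∈ (crMap F₁ X Y).ker,
        ι.app (GrpCat.of (Monoid.Coprod X Y)) w ∈ (crMap F X Y).ker) ∧
      (∀ w ∈ (crMap F X Y).ker,
        π.app (GrpCat.of (Monoid.Coprod X Y)) w ∈ (crMap F₂ X Y).ker) ∧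
      (∀ v ∈ (crMap F₂ X Y).ker,
        ∃ w ∈ (crMap F X Y).ker, π.app (GrpCat.of (Monoid.Coprod X Y)) w = v) ∧
      (∀ w ∈ (crMap F X Y).ker,
        (π.app (GrpCat.of (Monoid.Coprod X Y)) w = 1 ↔
          ∃ u ∈ (crMap F₁ X Y).ker, ι.app (GrpCat.of (Monoid.Coprod X Y)) u = w))) ∧
    ((∀ (X Y : Type u) (_ : Group X) (_ : Group Y), (crMap F X Y).ker = ⊥) ↔
      ((∀ (X Y : Type u) (_ : Group X) (_ : Group Y), (crMap F₁ X Y).ker = ⊥) ∧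
        (∀ (X Y : Type u) (_ : Group X) (_ : Group Y), (crMap F₂ X Y).ker = ⊥))) :=
  cross_effect_ses_of_ses_of_functors_general F₁ F F₂ ι π hinj hsurj hexact h₁
end
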